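/- arXiv:1703.06709 — 4 statements merged into one kernel-verified Lean document; each statement's English description precedes it below -/
import Mathlib

section
/- Let ({φ_n}, {ψ_n}) be a pair of monic biorthogonal polynomial sequences with respect to a bilinear form B on ℂ[z], with biorthogonality constants h_n. Let s† ∈ ℂ satisfy ψ_n(s†) ≠ 0 for all n ≥ 0, and set q†_n := −ψ_{n+1}(s†)/ψ_n(s†). Then for every n ≥ 0 the polynomial z − s† divides ψ_{n+1}(z) + q†_n ψ_n(z); the quotient ψ†_n(z) := (ψ_{n+1}(z) + q†_n ψ_n(z))/(z − s†) is a monic polynomial of degree n; and B†[z^m, ψ†_n(z)] = q†_n h_n δ_{m,n} for all n ≥ 0 and 0 ≤ m ≤ n, where B† is the bilinear form defined by B†[p, q] := B[p, (z − s†)q]. -/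
/-!
Write `p = ψ_{n+1} + q†_n ψ_n`. The choice of `q†_n` makes `s†` a root of `p`, and `p` is monic of
degree `n + 1`, so `ψ†_n = p / (z - s†)` is monic of degree `n`. Since `B†[z^m, ψ†_n] = B[z^m, p]`,
it remains to pair monomials with the `ψ_k`: as `φ_0, …, φ_{k-1}` span the polynomials of degree
`< k`, biorthogonality gives `B[z^m, ψ_k] = 0` for `m < k`, and `B[z^k, ψ_k] = B[φ_k, ψ_k] = h_k`
because `z^k - φ_k` has degree `< k`.
-/

open Polynomial

namespace Polynomial

section Field

variable {K : Type*} [Field K]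

theorem linearMap_apply_eq_zero_of_degree_lt (φ : ℕ → K[X]) (hφd : ∀ n : ℕ, (φ n).degree = n)
    (L : K[X] →ₗ[K] K) {k : ℕ} (hL : ∀ j < k, L (φ j) = 0) {p : K[X]} (hp : p.degree < k) :
    L p = 0 := by
  let S : Sequence K := ⟨φ, hφd⟩
  have hspan : Submodule.span K (S '' Set.Iio k) = degreeLT K k :=
    S.span_degreeLT fun i _ ↦ (leadingCoeff_ne_zero.mpr (S.ne_zero i)).isUnit
  have hle : degreeLT K k ≤ LinearMap.ker L := by
    rw [← hspan, Submodule.span_le]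
    rintro _ ⟨j, hj, rfl⟩
    exact hL j hj
  exact hle (mem_degreeLT.mpr hp)

theorem linearMap_apply_X_pow (φ : ℕ → K[X]) (hφd : ∀ n : ℕ, (φ n).degree = n)
    (L : K[X] →ₗ[K] K) {k : ℕ} (hφk : (φ k).Monic) (hL : ∀ j < k, L (φ j) = 0) :
    L (X ^ k) = L (φ k) := by
  have hlt : (X ^ k - φ k).degree < (k : WithBot ℕ) := by
    have := degree_sub_lt_left (p := X ^ k) (q := φ k) (by rw [degree_X_pow, hφd])
      (pow_ne_zero k X_ne_zero) (by rw [(monic_X_pow k).leadingCoeff, hφk.leadingCoeff])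
    rwa [degree_X_pow] at this
  rw [← sub_eq_zero, ← map_sub, linearMap_apply_eq_zero_of_degree_lt φ hφd L hL hlt]

theorem biorthogonal_apply_X_pow (B : K[X] →ₗ[K] K[X] →ₗ[K] K) (φ ψ : ℕ → K[X]) (h : ℕ → K)
    (hφm : ∀ n, (φ n).Monic) (hφd : ∀ n : ℕ, (φ n).degree = n)
    (hbi : ∀ m n : ℕ, B (φ m) (ψ n) = if m = n then h n else 0) {m k : ℕ} (hmk : m ≤ k) :
    B (X ^ m) (ψ k) = if m = k then h k else 0 := by
  have hL : ∀ j < k, B.flip (ψ k) (φ j) = 0 := fun j hj ↦ by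
    simp [hbi, hj.ne]
  rcases hmk.eq_or_lt with rfl | hlt
  · simpa [hbi] using linearMap_apply_X_pow φ hφd (B.flip (ψ m)) (hφm m) hL
  · rw [if_neg hlt.ne]
    exact linearMap_apply_eq_zero_of_degree_lt φ hφd (B.flip (ψ k)) hL
      (by rw [degree_X_pow]; exact_mod_cast hlt)

end Field

section CommRing

variable {R : Type*} [CommRing R]

theorem Monic.divByMonic_X_sub_C {p : R[X]} (hp : p.Monic) {s : R} (hs : p.IsRoot s) :
    (p /ₘ (X - C s)).Monic :=
  (monic_X_sub_C s).of_mul_monic_left (by rwa [mul_divByMonic_eq_iff_isRoot.mpr hs])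

theorem degree_divByMonic_X_sub_C [Nontrivial R] {p : R[X]} {n : ℕ} (hp : p.degree = (n + 1 : ℕ))
    (s : R) :
    (p /ₘ (X - C s)).degree = n := by
  have hq0 : p /ₘ (X - C s) ≠ 0 := by
    rw [Ne, divByMonic_eq_zero_iff (monic_X_sub_C s), degree_X_sub_C, hp, not_lt]
    exact_mod_cast Nat.le_add_left 1 n
  rw [degree_eq_natDegree hq0, natDegree_divByMonic _ (monic_X_sub_C s), natDegree_X_sub_C,
    natDegree_eq_of_degree_eq_some hp, Nat.add_sub_cancel]

end CommRing

end Polynomial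

theorem stmt_4_general
    (B : Polynomial ℂ →ₗ[ℂ] Polynomial ℂ →ₗ[ℂ] ℂ)
    (φ ψ : ℕ → Polynomial ℂ) (h : ℕ → ℂ)
    (hφm : ∀ n, (φ n).Monic) (hφd : ∀ n : ℕ, (φ n).degree = n)
    (hψm : ∀ n, (ψ n).Monic) (hψd : ∀ n : ℕ, (ψ n).degree = n)
    (hbi : ∀ m n : ℕ, B (φ m) (ψ n) = if m = n then h n else 0)
    (s : ℂ) (hs : ∀ n, (ψ n).eval s ≠ 0)
    (q : ℕ → ℂ) (hq : ∀ n, q n = -((ψ (n + 1)).eval s) / ((ψ n).eval s)) :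
    ∀ n : ℕ,
      (X - C s) ∣ (ψ (n + 1) + C (q n) * ψ n) ∧
      ((ψ (n + 1) + C (q n) * ψ n) /ₘ (X - C s)).Monic ∧
      ((ψ (n + 1) + C (q n) * ψ n) /ₘ (X - C s)).degree = n ∧
      ∀ m : ℕ, m ≤ n →
        B (X ^ m) ((X - C s) * ((ψ (n + 1) + C (q n) * ψ n) /ₘ (X - C s)))
          = q n * h n * (if m = n then 1 else 0) := by
  intro n
  have hroot : (ψ (n + 1) + C (q n) * ψ n).IsRoot s := by
    simp [hq n, div_mul_cancel₀ _ (hs n)]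
  have hlow : (C (q n) * ψ n).degree < (ψ (n + 1)).degree := by
    rw [← smul_eq_C_mul, hψd]
    exact (degree_smul_le _ _).trans_lt (by rw [hψd]; exact_mod_cast n.lt_succ_self)
  refine ⟨dvd_iff_isRoot.mpr hroot, ((hψm (n + 1)).add_of_left hlow).divByMonic_X_sub_C hroot,
    degree_divByMonic_X_sub_C (by rw [degree_add_eq_left_of_degree_lt hlow, hψd]) s,
    fun m hm ↦ ?_⟩
  rw [mul_divByMonic_eq_iff_isRoot.mpr hroot, map_add, ← smul_eq_C_mul, map_smul, smul_eq_mul,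
    biorthogonal_apply_X_pow B φ ψ h hφm hφd hbi (hm.trans n.le_succ),
    biorthogonal_apply_X_pow B φ ψ h hφm hφd hbi hm, if_neg (by omega)]
  split_ifs <;> ring

/-- Christoffel-type spectral transformation for the second family: `z - s†` divides
`ψ_{n+1} + q†_n ψ_n`, the quotient `ψ†_n` is monic of degree `n`, and it is biorthogonal
with respect to `B†[p, q] = B[p, (z - s†) q]` with constants `q†_n h_n`. -/
theorem stmt_4
    (B : Polynomial ℂ →ₗ[ℂ] Polynomial ℂ →ₗ[ℂ] ℂ)
    (φ ψ : ℕ → Polynomial ℂ) (h : ℕ → ℂ)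
    (hφm : ∀ n, (φ n).Monic) (hφd : ∀ n : ℕ, (φ n).degree = n)
    (hψm : ∀ n, (ψ n).Monic) (hψd : ∀ n : ℕ, (ψ n).degree = n)
    (hne : ∀ n, h n ≠ 0)
    (hbi : ∀ m n : ℕ, B (φ m) (ψ n) = if m = n then h n else 0)
    (s : ℂ) (hs : ∀ n, (ψ n).eval s ≠ 0)
    (q : ℕ → ℂ) (hq : ∀ n, q n = -((ψ (n + 1)).eval s) / ((ψ n).eval s)) :
    ∀ n : ℕ,
      (X - C s) ∣ (ψ (n + 1) + C (q n) * ψ n) ∧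
      ((ψ (n + 1) + C (q n) * ψ n) /ₘ (X - C s)).Monic ∧
      ((ψ (n + 1) + C (q n) * ψ n) /ₘ (X - C s)).degree = n ∧
      ∀ m : ℕ, m ≤ n →
        B (X ^ m) ((X - C s) * ((ψ (n + 1) + C (q n) * ψ n) /ₘ (X - C s)))
          = q n * h n * (if m = n then 1 else 0) :=
  stmt_4_general B φ ψ h hφm hφd hψm hψd hbi s hs q hq
end

section
/- Let B be a bilinear form on ℂ[z] with moment determinants τ_n, assume τ_n ≠ 0 for all n ≥ 1, and let ({φ_n}, {ψ_n}) be a pair of monic biorthogonal polynomial sequences with respect to B (so h_n = τ_{n+1}/τ_n). Let s† ∈ ℂ satisfy ψ_n(s†) ≠ 0 for all n, set q†_n := −ψ_{n+1}(s†)/ψ_n(s†), define B†[p, q] := B[p, (z − s†)q], and suppose ({φ†_n}, {ψ†_n}) is a pair of monic biorthogonal polynomial sequences with respect to B†. Then for every n ≥ 0: φ_{n+1}(z) = φ†_{n+1}(z) + e†_n φ†_n(z), where e†_n = τ_n τ_{n+2} / (q†_n (τ_{n+1})²). -/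
/-!
Multiplying `ψ†_m` by `z - s†` gives a monic polynomial of degree `m + 1` with
`B[φ_k, (z - s†) ψ†_m] = B†[φ_k, ψ†_m] = 0` for `k < m`, so `(z - s†) ψ†_m = ψ_{m+1} + c ψ_m`,
and evaluating at `s†` gives `c = q†_m`. Dually, `φ_{n+1} - φ†_{n+1}` has degree at most `n` and is
`B†`-orthogonal to every `ψ†_k` with `k < n`, since `(z - s†) ψ†_k` has degree `k + 1 < n + 1`;
hence it is a multiple of `φ†_n`. Pairing with `ψ†_n` shows that the multiple is `h_{n+1} / h†_n`,
and `h†_n = B[φ_n, (z - s†) ψ†_n] = q†_n h_n` by the first relation; with `h_n = τ_{n+1} / τ_n`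
the quotient `h_{n+1} / (q†_n h_n)` is `e†_n`.
-/

open Polynomial

namespace Polynomial

variable {R : Type*} [Ring R] {p q r : R[X]} {n : ℕ}

theorem Monic.degree_sub_lt_of_degree_eq (hp : p.Monic) (hq : q.Monic) (hpn : p.degree = n)
    (hqn : q.degree = n) : (p - q).degree < n := by
  have hp0 : p ≠ 0 := by rintro rfl; simp at hpn
  simpa [hpn] using
    degree_sub_lt_left (hpn.trans hqn.symm) hp0 (hp.leadingCoeff.trans hq.leadingCoeff.symm)

theorem degree_sub_C_coeff_mul_lt (hp : p.Monic) (hpn : p.degree = n) (hr : r.degree < ↑(n + 1)) :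
    (r - C (r.coeff n) * p).degree < n := by
  have hpn' : p.natDegree = n := natDegree_eq_of_degree_eq_some hpn
  refine (degree_lt_iff_coeff_zero _ _).mpr fun m hm => ?_
  rcases hm.eq_or_lt with rfl | hlt
  · simp [coeff_C_mul, ← hpn', hp.coeff_natDegree]
  · have hrm : r.coeff m = 0 := coeff_eq_zero_of_degree_lt (hr.trans_le (by exact_mod_cast hlt))
    have hpm : p.coeff m = 0 := coeff_eq_zero_of_degree_lt (by rw [hpn]; exact_mod_cast hlt)
    simp [coeff_C_mul, hrm, hpm]

theorem Monic.degree_X_sub_C_mul [Nontrivial R] (hp : p.Monic) (hpn : p.degree = n) (s : R) :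
    ((X - C s) * p).degree = ↑(n + 1) := by
  rw [hp.degree_mul, degree_X_sub_C, hpn, add_comm]
  norm_cast

end Polynomial

structure IsMonicBiorthogonal {R : Type*} [CommRing R] (B : R[X] →ₗ[R] R[X] →ₗ[R] R)
    (φ ψ : ℕ → R[X]) (h : ℕ → R) : Prop where
  monic_left (n : ℕ) : (φ n).Monic
  degree_left (n : ℕ) : (φ n).degree = n
  monic_right (n : ℕ) : (ψ n).Monic
  degree_right (n : ℕ) : (ψ n).degree = n
  apply_eq (m n : ℕ) : B (φ m) (ψ n) = if m = n then h n else 0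
  ne_zero (n : ℕ) : h n ≠ 0

namespace IsMonicBiorthogonal

section CommRing

variable {R : Type*} [CommRing R] {B : R[X] →ₗ[R] R[X] →ₗ[R] R} {φ ψ : ℕ → R[X]} {h : ℕ → R}

theorem flip (hB : IsMonicBiorthogonal B φ ψ h) : IsMonicBiorthogonal B.flip ψ φ h where
  monic_left := hB.monic_right
  degree_left := hB.degree_right
  monic_right := hB.monic_left
  degree_right := hB.degree_left
  apply_eq m n := by
    rw [LinearMap.flip_apply, hB.apply_eq]
    rcases eq_or_ne m n with rfl | hmn
    · simp
    · simp [hmn, hmn.symm]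
  ne_zero := hB.ne_zero

theorem apply_eq_zero_of_degree_lt (hB : IsMonicBiorthogonal B φ ψ h) {m : ℕ} {r : R[X]}
    (hr : r.degree < m) : B (φ m) r = 0 := by
  suffices ∀ N ≤ m, ∀ r : R[X], r.degree < N → B (φ m) r = 0 from this m le_rfl r hr
  intro N
  induction N with
  | zero => intro _ r hr; simp [show r = 0 by simpa using hr]
  | succ N ih =>
    intro hN r hr
    have hlow := ih (by omega) _
      (degree_sub_C_coeff_mul_lt (hB.monic_right N) (hB.degree_right N) hr)
    rwa [map_sub, C_mul', map_smul, hB.apply_eq, if_neg (by omega), smul_zero, sub_zero] at hlow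

theorem apply_eq_coeff_mul (hB : IsMonicBiorthogonal B φ ψ h) {n : ℕ} {r : R[X]}
    (hr : r.degree < ↑(n + 1)) : B (φ n) r = r.coeff n * h n := by
  have hlow := hB.apply_eq_zero_of_degree_lt
    (degree_sub_C_coeff_mul_lt (hB.monic_right n) (hB.degree_right n) hr)
  rwa [map_sub, C_mul', map_smul, hB.apply_eq, if_pos rfl, smul_eq_mul, sub_eq_zero] at hlow

theorem apply_of_monic (hB : IsMonicBiorthogonal B φ ψ h) {n : ℕ} {p : R[X]} (hp : p.Monic)
    (hpn : p.degree = n) : B (φ n) p = h n := by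
  rw [hB.apply_eq_coeff_mul (by rw [hpn]; exact_mod_cast n.lt_succ_self),
    ← natDegree_eq_of_degree_eq_some hpn, hp.coeff_natDegree, one_mul]

theorem eq_zero_of_degree_lt [NoZeroDivisors R] (hB : IsMonicBiorthogonal B φ ψ h) {n : ℕ}
    {r : R[X]} (hr : r.degree < n) (hvan : ∀ k < n, B (φ k) r = 0) : r = 0 := by
  by_contra hr0
  have hd : r.natDegree < n := (natDegree_lt_iff_degree_lt hr0).mpr hr
  have hlead := hB.apply_eq_coeff_mul (n := r.natDegree)
    (degree_le_natDegree.trans_lt (by exact_mod_cast Nat.lt_succ_self _))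
  rw [hvan _ hd, coeff_natDegree] at hlead
  exact mul_ne_zero (leadingCoeff_ne_zero.mpr hr0) (hB.ne_zero _) hlead.symm

theorem eq_C_coeff_mul [NoZeroDivisors R] (hB : IsMonicBiorthogonal B φ ψ h) {n : ℕ}
    {r : R[X]} (hr : r.degree < ↑(n + 1)) (hvan : ∀ k < n, B (φ k) r = 0) :
    r = C (r.coeff n) * ψ n := by
  refine sub_eq_zero.mp (hB.eq_zero_of_degree_lt
    (degree_sub_C_coeff_mul_lt (hB.monic_right n) (hB.degree_right n) hr) fun k hk => ?_)
  rw [map_sub, hvan k hk, C_mul', map_smul, hB.apply_eq, if_neg hk.ne, smul_zero, sub_zero]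

end CommRing

section Field

variable {K : Type*} [Field K] {B Bd : K[X] →ₗ[K] K[X] →ₗ[K] K} {φ ψ φd ψd : ℕ → K[X]}
  {h hd : ℕ → K} {s : K}

theorem X_sub_C_mul_eq_add (hB : IsMonicBiorthogonal B φ ψ h)
    (hBd : IsMonicBiorthogonal Bd φd ψd hd) (hBdB : ∀ p r, Bd p r = B p ((X - C s) * r)) {m : ℕ}
    (hs : (ψ m).eval s ≠ 0) :
    (X - C s) * ψd m = ψ (m + 1) + C (-(ψ (m + 1)).eval s / (ψ m).eval s) * ψ m := by
  set u := (X - C s) * ψd m - ψ (m + 1) with hu_def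
  have hu : u.degree < ↑(m + 1) :=
    ((monic_X_sub_C s).mul (hBd.monic_right m)).degree_sub_lt_of_degree_eq (hB.monic_right _)
      ((hBd.monic_right m).degree_X_sub_C_mul (hBd.degree_right m) s) (hB.degree_right _)
  have hvan (k : ℕ) (hk : k < m) : B (φ k) u = 0 := by
    rw [map_sub, ← hBdB, hB.apply_eq, if_neg (by omega), sub_zero]
    exact hBd.flip.apply_eq_zero_of_degree_lt (by rw [hB.degree_left]; exact_mod_cast hk)
  have hu_eq := hB.eq_C_coeff_mul hu hvan
  have hcoeff : u.coeff m = -(ψ (m + 1)).eval s / (ψ m).eval s := by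
    have hev := congrArg (eval s) hu_eq
    simp only [hu_def, eval_sub, eval_mul, eval_X, eval_C, sub_self, zero_mul] at hev
    rw [eq_div_iff hs]
    linear_combination -hev
  rw [← hcoeff, ← hu_eq, hu_def]
  ring

theorem christoffel_const_eq (hB : IsMonicBiorthogonal B φ ψ h)
    (hBd : IsMonicBiorthogonal Bd φd ψd hd) (hBdB : ∀ p r, Bd p r = B p ((X - C s) * r)) {n : ℕ}
    (hs : (ψ n).eval s ≠ 0) : hd n = -(ψ (n + 1)).eval s / (ψ n).eval s * h n :=
  calc hd n = Bd (φ n) (ψd n) :=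
        (hBd.flip.apply_of_monic (hB.monic_left n) (hB.degree_left n)).symm
    _ = B (φ n) (ψ (n + 1) + C (-(ψ (n + 1)).eval s / (ψ n).eval s) * ψ n) := by
        rw [hBdB, X_sub_C_mul_eq_add hB hBd hBdB hs]
    _ = -(ψ (n + 1)).eval s / (ψ n).eval s * h n := by
        rw [map_add, C_mul', map_smul, hB.apply_eq, hB.apply_eq, if_neg (by omega), if_pos rfl,
          smul_eq_mul, zero_add]

theorem left_succ_eq_add_C_mul (hB : IsMonicBiorthogonal B φ ψ h)
    (hBd : IsMonicBiorthogonal Bd φd ψd hd) (hBdB : ∀ p r, Bd p r = B p ((X - C s) * r))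
    (n : ℕ) : φ (n + 1) = φd (n + 1) + C (h (n + 1) / hd n) * φd n := by
  set r := φ (n + 1) - φd (n + 1) with hr_def
  have hr : r.degree < ↑(n + 1) := (hB.monic_left _).degree_sub_lt_of_degree_eq
    (hBd.monic_left _) (hB.degree_left _) (hBd.degree_left _)
  have hmon (k : ℕ) : ((X - C s) * ψd k).Monic := (monic_X_sub_C s).mul (hBd.monic_right k)
  have hdeg (k : ℕ) : ((X - C s) * ψd k).degree = ↑(k + 1) :=
    (hBd.monic_right k).degree_X_sub_C_mul (hBd.degree_right k) s
  have hpair (k : ℕ) (hk : k ≤ n) : Bd.flip (ψd k) r = B (φ (n + 1)) ((X - C s) * ψd k) := by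
    rw [LinearMap.flip_apply, hr_def, map_sub, LinearMap.sub_apply, hBd.apply_eq,
      if_neg (by omega), sub_zero, hBdB]
  have hvan (k : ℕ) (hk : k < n) : Bd.flip (ψd k) r = 0 := by
    rw [hpair k hk.le]
    exact hB.apply_eq_zero_of_degree_lt (by rw [hdeg]; exact_mod_cast Nat.succ_lt_succ hk)
  have hcoeff : r.coeff n * hd n = h (n + 1) := by
    rw [← hBd.flip.apply_eq_coeff_mul hr, hpair n le_rfl]
    exact hB.apply_of_monic (hmon n) (hdeg n)
  rw [← (eq_div_iff (hBd.ne_zero n)).mpr hcoeff, ← hBd.flip.eq_C_coeff_mul hr hvan, hr_def]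
  ring

end Field

end IsMonicBiorthogonal

theorem stmt_5_general
    (B Bd : Polynomial ℂ →ₗ[ℂ] Polynomial ℂ →ₗ[ℂ] ℂ)
    (μ : ℕ → ℕ → ℂ)
    (τ : ℕ → ℂ)
    (hτ : ∀ n : ℕ, τ n = Matrix.det (Matrix.of fun i j : Fin n => μ (i : ℕ) (j : ℕ)))
    (hτne : ∀ n : ℕ, 1 ≤ n → τ n ≠ 0)
    (φ ψ : ℕ → Polynomial ℂ)
    (hφm : ∀ n, (φ n).Monic) (hφd : ∀ n : ℕ, (φ n).degree = n)
    (hψm : ∀ n, (ψ n).Monic) (hψd : ∀ n : ℕ, (ψ n).degree = n)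
    (hbi : ∀ m n : ℕ, B (φ m) (ψ n) = if m = n then τ (n + 1) / τ n else 0)
    (s : ℂ) (hs : ∀ n, (ψ n).eval s ≠ 0)
    (q : ℕ → ℂ) (hq : ∀ n, q n = -((ψ (n + 1)).eval s) / ((ψ n).eval s))
    (hBd : ∀ p r : Polynomial ℂ, Bd p r = B p ((X - C s) * r))
    (φd ψd : ℕ → Polynomial ℂ) (hd : ℕ → ℂ)
    (hφdm : ∀ n, (φd n).Monic) (hφdd : ∀ n : ℕ, (φd n).degree = n)
    (hψdm : ∀ n, (ψd n).Monic) (hψdd : ∀ n : ℕ, (ψd n).degree = n)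
    (hdne : ∀ n, hd n ≠ 0)
    (hbid : ∀ m n : ℕ, Bd (φd m) (ψd n) = if m = n then hd n else 0) :
    ∀ n : ℕ, φ (n + 1) = φd (n + 1) + C (τ n * τ (n + 2) / (q n * (τ (n + 1)) ^ 2)) * φd n := by
  have hτ_ne (n : ℕ) : τ n ≠ 0 := by
    rcases n with _ | n
    · simp [hτ]
    · exact hτne _ (by omega)
  have hpair : IsMonicBiorthogonal B φ ψ fun n => τ (n + 1) / τ n :=
    ⟨hφm, hφd, hψm, hψd, hbi, fun n => div_ne_zero (hτ_ne _) (hτ_ne _)⟩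
  have hpair_d : IsMonicBiorthogonal Bd φd ψd hd := ⟨hφdm, hφdd, hψdm, hψdd, hbid, hdne⟩
  intro n
  rw [hpair.left_succ_eq_add_C_mul hpair_d hBd n,
    hpair.christoffel_const_eq hpair_d hBd (hs n), ← hq]
  have hτn := hτ_ne n
  have hτn1 := hτ_ne (n + 1)
  congr 2
  field_simp

/-- Geronimus-type relation: `φ_{n+1} = φ†_{n+1} + e†_n φ†_n` with
`e†_n = τ_n τ_{n+2} / (q†_n τ_{n+1}²)`, where `(φ†, ψ†)` is the pair of monic
biorthogonal polynomial sequences for `B†[p, q] = B[p, (z - s†) q]`. -/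
theorem stmt_5
    (B Bd : Polynomial ℂ →ₗ[ℂ] Polynomial ℂ →ₗ[ℂ] ℂ)
    (μ : ℕ → ℕ → ℂ) (hμ : ∀ i j : ℕ, μ i j = B (X ^ i) (X ^ j))
    (τ : ℕ → ℂ)
    (hτ : ∀ n : ℕ, τ n = Matrix.det (Matrix.of fun i j : Fin n => μ (i : ℕ) (j : ℕ)))
    (hτne : ∀ n : ℕ, 1 ≤ n → τ n ≠ 0)
    (φ ψ : ℕ → Polynomial ℂ)
    (hφm : ∀ n, (φ n).Monic) (hφd : ∀ n : ℕ, (φ n).degree = n)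
    (hψm : ∀ n, (ψ n).Monic) (hψd : ∀ n : ℕ, (ψ n).degree = n)
    (hbi : ∀ m n : ℕ, B (φ m) (ψ n) = if m = n then τ (n + 1) / τ n else 0)
    (s : ℂ) (hs : ∀ n, (ψ n).eval s ≠ 0)
    (q : ℕ → ℂ) (hq : ∀ n, q n = -((ψ (n + 1)).eval s) / ((ψ n).eval s))
    (hBd : ∀ p r : Polynomial ℂ, Bd p r = B p ((X - C s) * r))
    (φd ψd : ℕ → Polynomial ℂ) (hd : ℕ → ℂ)
    (hφdm : ∀ n, (φd n).Monic) (hφdd : ∀ n : ℕ, (φd n).degree = n)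
    (hψdm : ∀ n, (ψd n).Monic) (hψdd : ∀ n : ℕ, (ψd n).degree = n)
    (hdne : ∀ n, hd n ≠ 0)
    (hbid : ∀ m n : ℕ, Bd (φd m) (ψd n) = if m = n then hd n else 0) :
    ∀ n : ℕ, φ (n + 1) = φd (n + 1) + C (τ n * τ (n + 2) / (q n * (τ (n + 1)) ^ 2)) * φd n :=
  stmt_5_general B Bd μ τ hτ hτne φ ψ hφm hφd hψm hψd hbi s hs q hq hBd φd ψd hd hφdm hφdd hψdm hψdd
    hdne hbid
end

section
/- Let μ_{i,j} (i, j ≥ 0) be complex numbers and s ∈ ℂ, and set μ'_{i,j} := μ_{i+1,j} − s·μ_{i,j}. For k, l ≥ 0 and n ≥ 0 define τ^{(k,l)}_0 := 1, τ^{(k,l)}_n := det(μ_{k+i, l+j})_{i,j=0}^{n-1}, and τ'^{(k,l)}_0 := 1, τ'^{(k,l)}_n := det(μ'_{k+i, l+j})_{i,j=0}^{n-1}. Then for all k, l ≥ 0 and n ≥ 0 the bilinear identity τ'^{(k,l)}_{n+1} · τ^{(k+1,l)}_n = τ'^{(k,l)}_n · τ^{(k+1,l)}_{n+1} − s · τ^{(k,l)}_{n+1}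 · τ'^{(k+1,l)}_n holds. -/
/-!
Let `H` be the matrix `(μ_{k+i, l+j})_{0 ≤ i ≤ n+1, 0 ≤ j ≤ n}` bordered on the left by the
geometric column `(s^i)_i`. Subtracting `s` times each row from the next one clears the border
below its first entry `1` and leaves `(μ'_{k+i, l+j})`, so `det H = τ'^{(k,l)}_{n+1}`. In the same
way the minors of `H` obtained by deleting an end row and an end column (or both) are
`τ'^{(k,l)}_n`, `τ^{(k+1,l)}_{n+1}`, `τ^{(k,l)}_{n+1}`, `s τ'^{(k+1,l)}_n` and `τ^{(k+1,l)}_n`,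
and the bilinear identity is the Desnanot–Jacobi identity for `H`.

Desnanot–Jacobi is the two-index case of Jacobi's complementary minor theorem, which is proved
for the generic matrix, whose determinant is not a zero divisor, and then specialised.
-/

open Matrix

namespace Matrix

variable {R : Type*} [CommRing R]

section Jacobi

variable {m o : Type*} [Fintype m] [DecidableEq m] [Fintype o] [DecidableEq o]

theorem det_mul_det_toBlocks₂₂_adjugate (A : Matrix (m ⊕ o) (m ⊕ o) R) :
    A.det * A.adjugate.toBlocks₂₂.det = A.det ^ Fintype.card o * A.toBlocks₁₁.det := by
  let X : Matrix (m ⊕ o) (m ⊕ o) R := fromBlocks 1 A.adjugate.toBlocks₁₂ 0 A.adjugate.toBlocks₂₂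
  have hAX : A * X = fromBlocks A.toBlocks₁₁ 0 A.toBlocks₂₁ (A.det • 1) := by
    have h := mul_adjugate A
    ext (i | i) (j | j)
    · simp [X, mul_apply, Fintype.sum_sum_type, one_apply, toBlocks₁₁]
    · simpa [X, mul_apply, Fintype.sum_sum_type, toBlocks₁₂, toBlocks₂₂]
        using congrFun (congrFun h (.inl i)) (.inr j)
    · simp [X, mul_apply, Fintype.sum_sum_type, one_apply, toBlocks₂₁]
    · simpa [X, mul_apply, Fintype.sum_sum_type, toBlocks₁₂, toBlocks₂₂, one_apply]
        using congrFun (congrFun h (.inr i)) (.inr j)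
  calc A.det * A.adjugate.toBlocks₂₂.det = (A * X).det := by
        rw [det_mul, det_fromBlocks_zero₂₁, det_one, one_mul]
    _ = A.det ^ Fintype.card o * A.toBlocks₁₁.det := by
        rw [hAX, det_fromBlocks_zero₁₂, det_smul, det_one, mul_one, mul_comm]

theorem det_toBlocks₂₂_adjugate [Nonempty o] (A : Matrix (m ⊕ o) (m ⊕ o) R) :
    A.adjugate.toBlocks₂₂.det = A.det ^ (Fintype.card o - 1) * A.toBlocks₁₁.det := by
  let A' := mvPolynomialX (m ⊕ o) (m ⊕ o) ℤ
  suffices A'.adjugate.toBlocks₂₂.det = A'.det ^ (Fintype.card o - 1) * A'.toBlocks₁₁.det by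
    have := congrArg (MvPolynomial.aeval fun p : (m ⊕ o) × (m ⊕ o) => A p.1 p.2) this
    rw [map_mul, map_pow, AlgHom.map_det, AlgHom.map_det, AlgHom.map_det] at this
    rw [← mvPolynomialX_mapMatrix_aeval ℤ A, ← AlgHom.map_adjugate]
    exact this
  apply mul_left_cancel₀ (det_mvPolynomialX_ne_zero (m ⊕ o) ℤ)
  rw [det_mul_det_toBlocks₂₂_adjugate, ← mul_assoc, ← pow_succ',
    Nat.sub_add_cancel Fintype.card_pos]

end Jacobi

noncomputable def finSumFinTwoEquivInteriorEnds (n : ℕ) : Fin n ⊕ Fin 2 ≃ Fin (n + 2) :=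
  Equiv.ofBijective (Sum.elim (fun i : Fin n => i.succ.castSucc) ![0, Fin.last (n + 1)]) <| by
    rw [Fintype.bijective_iff_injective_and_card]
    refine ⟨fun x y h => ?_, by simp⟩
    have hval := congrArg Fin.val h
    rcases x with i | a <;> rcases y with j | b <;> (try fin_cases a) <;> (try fin_cases b) <;>
      simp [Fin.ext_iff] at hval ⊢ <;> omega

theorem desnanot_jacobi {n : ℕ} (M : Matrix (Fin (n + 2)) (Fin (n + 2)) R) :
    M.det * (M.submatrix (fun i : Fin n => i.castSucc.succ) fun j => j.castSucc.succ).det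
      = (M.submatrix Fin.castSucc Fin.castSucc).det * (M.submatrix Fin.succ Fin.succ).det
        - (M.submatrix Fin.castSucc Fin.succ).det * (M.submatrix Fin.succ Fin.castSucc).det := by
  let e := finSumFinTwoEquivInteriorEnds n
  have h := det_toBlocks₂₂_adjugate (M.submatrix e e)
  have hinterior : (M.submatrix e e).toBlocks₁₁
      = M.submatrix (fun i : Fin n => i.castSucc.succ) fun j => j.castSucc.succ := by
    ext; simp [e, finSumFinTwoEquivInteriorEnds, toBlocks₁₁]
  rw [adjugate_submatrix_equiv_self, det_submatrix_equiv_self, det_fin_two, hinterior] at h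
  simp only [toBlocks₂₂, e, finSumFinTwoEquivInteriorEnds, Equiv.coe_ofBijective, submatrix_apply,
    Sum.elim_inr, adjugate_fin_succ_eq_det_submatrix, of_apply, cons_val_zero, cons_val_one,
    cons_val_fin_one, Fin.val_zero, Fin.val_last, add_zero, zero_add, pow_zero, one_mul,
    Fin.succAbove_zero, Fin.succAbove_last, Fintype.card_fin, Nat.add_one_sub_one, pow_one,
    Even.add_self, Even.neg_pow, one_pow] at h
  have hsign : ((-1 : R) ^ (n + 1)) * (-1) ^ (n + 1) = 1 := by rw [← mul_pow]; simp
  rw [mul_mul_mul_comm, hsign, one_mul] at h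
  linear_combination -h

theorem det_of_cons_geometric {m : ℕ} (g : Fin (m + 1) → R) (s : R)
    (hg : ∀ i : Fin m, g i.succ = s * g i.castSucc) (f : Fin (m + 1) → Fin m → R) :
    (of fun i => Fin.cons (g i) (f i) : Matrix (Fin (m + 1)) (Fin (m + 1)) R).det
      = g 0 * (of fun i j => f i.succ j - s * f i.castSucc j).det := by
  let B : Matrix (Fin (m + 1)) (Fin (m + 1)) R := of <|
    Fin.cons (Fin.cons (g 0) (f 0)) fun i => Fin.cons 0 fun j => f i.succ j - s * f i.castSucc j
  rw [det_eq_of_forall_row_eq_smul_add_pred (B := B) (fun _ => s)]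
  · rw [det_succ_column_zero, Fin.sum_univ_succ]
    simp only [B, Fin.val_zero, pow_zero, of_apply, Fin.cons_zero, Fin.cons_succ, one_mul,
      Fin.succAbove_zero, mul_zero, zero_mul, Finset.sum_const_zero, add_zero]
    rfl
  · intro j; rfl
  · intro i j
    cases j using Fin.cases <;> simp [B, hg]

end Matrix

section Moments

variable {R : Type*} [CommRing R] (μ : ℕ → ℕ → R) (s : R)

def momentMatrix (k l n : ℕ) : Matrix (Fin n) (Fin n) R :=
  of fun i j => μ (k + i) (l + j)

def borderedMomentMatrix (k l n : ℕ) : Matrix (Fin (n + 1)) (Fin (n + 1)) R :=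
  of fun i => Fin.cons (s ^ (i : ℕ)) fun j => μ (k + i) (l + j)

theorem det_borderedMomentMatrix (k l n : ℕ) :
    (borderedMomentMatrix μ s k l n).det
      = (momentMatrix (fun i j => μ (i + 1) j - s * μ i j) k l n).det := by
  rw [borderedMomentMatrix, det_of_cons_geometric _ s (fun i => pow_succ' s i)]
  simp [momentMatrix, add_assoc]

theorem borderedMomentMatrix_submatrix_castSucc_castSucc (k l n : ℕ) :
    (borderedMomentMatrix μ s k l (n + 1)).submatrix Fin.castSucc Fin.castSucc
      = borderedMomentMatrix μ s k l n := by
  ext i j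
  cases j using Fin.cases <;> simp [borderedMomentMatrix]

theorem det_borderedMomentMatrix_submatrix_succ_castSucc (k l n : ℕ) :
    ((borderedMomentMatrix μ s k l (n + 1)).submatrix Fin.succ Fin.castSucc).det
      = s * (momentMatrix (fun i j => μ (i + 1) j - s * μ i j) (k + 1) l n).det := by
  have h : (borderedMomentMatrix μ s k l (n + 1)).submatrix Fin.succ Fin.castSucc
      = of fun i : Fin (n + 1) =>
          Fin.cons (s ^ ((i : ℕ) + 1)) fun j : Fin n => μ (k + 1 + i) (l + j) := by
    ext i j
    cases j using Fin.cases <;> simp [borderedMomentMatrix, add_assoc, add_comm 1]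
  rw [h, det_of_cons_geometric _ s (fun i => pow_succ' s _)]
  simp [momentMatrix, add_assoc]

theorem borderedMomentMatrix_submatrix_castSucc_succ (k l n : ℕ) :
    (borderedMomentMatrix μ s k l n).submatrix Fin.castSucc Fin.succ = momentMatrix μ k l n :=
  rfl

theorem borderedMomentMatrix_submatrix_succ_succ (k l n : ℕ) :
    (borderedMomentMatrix μ s k l n).submatrix Fin.succ Fin.succ = momentMatrix μ (k + 1) l n := by
  ext i j
  simp [borderedMomentMatrix, momentMatrix, add_assoc, add_comm 1]

theorem borderedMomentMatrix_submatrix_interior (k l n : ℕ) :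
    ((borderedMomentMatrix μ s k l (n + 1)).submatrix (fun i : Fin n => i.castSucc.succ)
      fun j => j.castSucc.succ) = momentMatrix μ (k + 1) l n := by
  ext i j
  simp [borderedMomentMatrix, momentMatrix, add_assoc, add_comm 1]

end Moments

/-- The bilinear identity (nd2d-toda-1-bilinear):
`τ'^{(k,l)}_{n+1} τ^{(k+1,l)}_n = τ'^{(k,l)}_n τ^{(k+1,l)}_{n+1} - s τ^{(k,l)}_{n+1} τ'^{(k+1,l)}_n`
for the shifted moment determinants, where `μ'_{i,j} = μ_{i+1,j} - s μ_{i,j}`. -/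
theorem stmt_8
    (μ : ℕ → ℕ → ℂ) (s : ℂ)
    (μ' : ℕ → ℕ → ℂ) (hμ' : ∀ i j : ℕ, μ' i j = μ (i + 1) j - s * μ i j)
    (τ τ' : ℕ → ℕ → ℕ → ℂ)
    (hτ : ∀ k l n : ℕ, τ k l n = Matrix.det (Matrix.of fun i j : Fin n => μ (k + i) (l + j)))
    (hτ' : ∀ k l n : ℕ, τ' k l n = Matrix.det (Matrix.of fun i j : Fin n => μ' (k + i) (l + j))) :
    ∀ k l n : ℕ,
      τ' k l (n + 1) * τ (k + 1) l n
        = τ' k l n * τ (k + 1) l (n + 1) - s * (τ k l (n + 1) * τ' (k + 1) l n) := by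
  obtain rfl : μ' = fun i j => μ (i + 1) j - s * μ i j := by funext i j; exact hμ' i j
  obtain rfl : τ = fun k l n => (momentMatrix μ k l n).det := by funext k l n; exact hτ k l n
  obtain rfl : τ' = fun k l n => (momentMatrix (fun i j => μ (i + 1) j - s * μ i j) k l n).det := by
    funext k l n; exact hτ' k l n
  intro k l n
  have h := desnanot_jacobi (borderedMomentMatrix μ s k l (n + 1))
  rw [borderedMomentMatrix_submatrix_castSucc_castSucc, borderedMomentMatrix_submatrix_succ_succ,
    borderedMomentMatrix_submatrix_castSucc_succ, borderedMomentMatrix_submatrix_interior,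
    det_borderedMomentMatrix_submatrix_succ_castSucc, det_borderedMomentMatrix,
    det_borderedMomentMatrix] at h
  linear_combination h
end

section
/- Let M ≥ 1, N ≥ 1, let ζ_0, …, ζ_{N−1} be real numbers with 0 < ζ_0 < ζ_1 < … < ζ_{N−1}, set z_r := ζ_r^M, let s^{(0)}, s^{(1)}, … be real numbers with s^{(τ)} < z_0 for all τ ≥ 0, and let w_r^{(m)} (0 ≤ r ≤ N−1, m ∈ ℤ) be positive reals with w_r^{(m+M)} = w_r^{(m)}. Define the recursive quantities w^{(m)}_{r_0,…,r_{n−1}} by w^{(m+1)}_{r_0,…,r_{n−3},r_{n−2},r_{n−1}} := ( w^{(m)}_{r_0,…,r_{n−3},r_{n−2}} w^{(m+1)}_{r_0,…,r_{n−3},r_{n−1}} ζ_{r_{n−1}} − w^{(m+1)}_{r_0,…,r_{n−3},r_{n−2}} w^{(m)}_{r_0,…,r_{n−3},r_{n−1}} ζ_{r_{n−2}} ) / w^{(m)}_{r_0,…,r_{n−3},r_{n−2}}, and suppose the strict inequality w^{(m)}_{r_0,…,r_{n−3},r_{n−2}} · w^{(m+1)}_{r_0,…,r_{n−3},r_{n−1}}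 · ζ_{r_{n−1}} > w^{(m+1)}_{r_0,…,r_{n−3},r_{n−2}} · w^{(m)}_{r_0,…,r_{n−3},r_{n−1}} · ζ_{r_{n−2}} holds for all m and all strictly increasing tuples of length n, 2 ≤ n ≤ N. Then, defining μ^{(t)}_m := Σ_{r=0}^{N−1} w_r^{(m)} ζ_r^m Π_{τ=0}^{t−1}(z_r − s^{(τ)}) and τ^{(k,t)}_n := det(μ^{(t)}_{k+i+Mj})_{i,j=0}^{n-1}, we have τ^{(k,t)}_n > 0 for all k ≥ 0, all t ≥ 0, and all 1 ≤ n ≤ N. -/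
/-!
The moment matrix `(μ^{(t)}_{k+i+Mj})` factors as `C * V`, where `V r j = z_r ^ j` is a
rectangular Vandermonde matrix in the increasing nodes `z_r = ζ_r ^ M` (this uses the
`M`-periodicity of the weights) and the `r`-th column of `C` is `w_r^{(k+i)} ζ_r^{k+i}` times the
positive factor `∏_τ (z_r - s^{(τ)})`. By the Cauchy–Binet formula `τ^{(k,t)}_n` is a sum of
products of maximal minors of `C` and of `V`; the latter are positive Vandermonde determinants.
The maximal minors of `C` are, up to positive column factors, the determinants
`D_n(r; m) = det (w_{r_l}^{(m+i)} ζ_{r_l}^i)` (`weightedVandermonde`). The Desnanot–Jacobi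
identity for the first and last rows and the last two columns of this matrix shows that
`D_{n+1}(r; m) / D_n(r_0, …, r_{n-1}; m)` satisfies the recursion defining
`W^{(m+n)}_{r_0,…,r_n}`, so `D_n` is a product of values of `W`, which are positive because the
numerators in that recursion are.
-/

open Function Finset

namespace Matrix

variable {R : Type*} [CommRing R]

section Jacobi

variable {n : Type*} [Fintype n] [DecidableEq n]

theorem det_one_updateCol_updateCol {c d : n} (hcd : c ≠ d) (u v : n → R) :
    (((1 : Matrix n n R).updateCol c u).updateCol d v).det = u c * v d - u d * v c := by
  -- a rank-two perturbation of the identity: apply `det (1 + U * V) = det (1 + V * U)`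
  let U : Matrix n (Fin 2) R :=
    of fun i => ![u i - (Pi.single c 1 : n → R) i, v i - (Pi.single d 1 : n → R) i]
  let V : Matrix (Fin 2) n R := of ![Pi.single c 1, Pi.single d 1]
  have hUV : ((1 : Matrix n n R).updateCol c u).updateCol d v = 1 + U * V := by
    ext i j
    by_cases hjd : j = d
    · subst hjd
      simp [U, V, mul_apply, Fin.sum_univ_two, one_apply, Pi.single_apply, hcd.symm]
    by_cases hjc : j = c
    · subst hjc
      simp [U, V, mul_apply, Fin.sum_univ_two, one_apply, Pi.single_apply, hcd]
    simp [U, V, mul_apply, Fin.sum_univ_two, one_apply, Pi.single_apply, hjd, hjc]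
  rw [hUV, det_one_add_mul_comm, det_fin_two]
  simp [U, V, Pi.single_apply, hcd, hcd.symm]
  ring

theorem det_updateCol_single (A : Matrix n n R) (a c : n) :
    (A.updateCol c (Pi.single a 1)).det = adjugate A c a := by
  rw [← det_transpose, ← updateRow_transpose, ← adjugate_apply, ← adjugate_transpose,
    transpose_apply]

theorem det_mul_det_updateCol_updateCol_single_of_ne_zero [IsDomain R] {A : Matrix n n R}
    (hA : A.det ≠ 0) {c d : n} (hcd : c ≠ d) (a b : n) :
    A.det * ((A.updateCol c (Pi.single a 1)).updateCol d (Pi.single b 1)).det =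
      adjugate A c a * adjugate A d b - adjugate A d a * adjugate A c b := by
  set u := adjugate A *ᵥ Pi.single a 1
  set v := adjugate A *ᵥ Pi.single b 1
  have hcol : ∀ e, A *ᵥ (adjugate A *ᵥ Pi.single e 1) = A.det • Pi.single e 1 := fun e => by
    rw [mulVec_mulVec, mul_adjugate, smul_mulVec, one_mulVec]
  have hprod : A * ((1 : Matrix n n R).updateCol c u).updateCol d v =
      (A.updateCol c (A.det • Pi.single a 1)).updateCol d (A.det • Pi.single b 1) := by
    rw [mul_updateCol, mul_updateCol, mul_one, hcol, hcol]
  have hdet := congrArg det hprod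
  rw [det_mul, det_one_updateCol_updateCol hcd, det_updateCol_smul, updateCol_comm _ hcd,
    det_updateCol_smul, updateCol_comm _ hcd.symm] at hdet
  simp only [u, v, mulVec_single_one, col_apply] at hdet
  apply mul_left_cancel₀ hA
  linear_combination -hdet

/-- Jacobi's identity for the `2 × 2` minors of the adjugate. -/
theorem det_mul_det_updateCol_updateCol_single (A : Matrix n n R) {c d : n} (hcd : c ≠ d)
    (a b : n) :
    A.det * ((A.updateCol c (Pi.single a 1)).updateCol d (Pi.single b 1)).det =
      adjugate A c a * adjugate A d b - adjugate A d a * adjugate A c b := by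
  let f := MvPolynomial.aeval (R := ℤ) fun p : n × n => A p.1 p.2
  have hX : f.mapMatrix (mvPolynomialX n n ℤ) = A := mvPolynomialX_mapMatrix_aeval ℤ A
  have hadj : ∀ i j, f (adjugate (mvPolynomialX n n ℤ) i j) = adjugate A i j := fun i j => by
    rw [← hX, ← AlgHom.map_adjugate]
    rfl
  have hsingle : ∀ e : n, (f ∘ Pi.single e 1 : n → R) = Pi.single e 1 := fun e => by
    funext j
    simp [Pi.single_apply, apply_ite f]
  have h := congrArg f (det_mul_det_updateCol_updateCol_single_of_ne_zero
    (det_mvPolynomialX_ne_zero n ℤ) hcd a b)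
  simp only [map_mul, map_sub, AlgHom.map_det, hadj, AlgHom.mapMatrix_apply, map_updateCol,
    hsingle] at h
  rwa [← AlgHom.mapMatrix_apply, hX] at h

end Jacobi

theorem submatrix_castSucc_updateCol_castSucc {α : Type*} {q : ℕ}
    (A : Matrix (Fin (q + 1)) (Fin (q + 1)) α) (j : Fin q) (v : Fin (q + 1) → α) :
    (A.updateCol j.castSucc v).submatrix Fin.castSucc Fin.castSucc =
      (A.submatrix Fin.castSucc Fin.castSucc).updateCol j (v ∘ Fin.castSucc) := by
  ext i l
  by_cases h : l = j <;> simp [h]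

/-- The Desnanot–Jacobi identity, for the first and last rows and the last two columns. -/
theorem det_mul_det_submatrix_castSucc_succ {p : ℕ} (A : Matrix (Fin (p + 2)) (Fin (p + 2)) R) :
    A.det * (A.submatrix (Fin.castSucc ∘ Fin.succ) (Fin.castSucc ∘ Fin.castSucc)).det =
      (A.submatrix Fin.succ (Fin.last p).castSucc.succAbove).det *
          (A.submatrix Fin.castSucc Fin.castSucc).det -
        (A.submatrix Fin.castSucc (Fin.last p).castSucc.succAbove).det *
          (A.submatrix Fin.succ Fin.castSucc).det := by
  have hK : ((A.updateCol (Fin.last p).castSucc (Pi.single 0 1)).updateCol (Fin.last (p + 1))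
      (Pi.single (Fin.last (p + 1)) 1)).det =
      (-1) ^ p * (A.submatrix (Fin.castSucc ∘ Fin.succ) (Fin.castSucc ∘ Fin.castSucc)).det := by
    have hsingle : (Pi.single 0 1 : Fin (p + 2) → R) ∘ Fin.castSucc = Pi.single 0 1 := by
      funext i
      simp [Pi.single_apply]
    rw [det_updateCol_single, adjugate_fin_succ_eq_det_submatrix, Fin.succAbove_last,
      submatrix_castSucc_updateCol_castSucc, hsingle, det_updateCol_single,
      adjugate_fin_succ_eq_det_submatrix, submatrix_submatrix]
    simp [← two_mul, pow_mul]
  have J := det_mul_det_updateCol_updateCol_single A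
    (Fin.castSucc_lt_last (Fin.last p)).ne 0 (Fin.last (p + 1))
  rw [hK] at J
  simp only [adjugate_fin_succ_eq_det_submatrix, Fin.succAbove_last, Fin.succAbove_zero,
    Fin.val_last, Fin.val_castSucc, Fin.val_zero, zero_add, pow_add, pow_one] at J
  rcases Nat.even_or_odd p with hp | hp
  · simp only [hp.neg_one_pow] at J
    linear_combination J
  · simp only [hp.neg_one_pow] at J
    linear_combination -J

end Matrix

def injectiveEquivStrictMonoProdPerm (ι : Type*) [LinearOrder ι] (n : ℕ) :
    {φ : Fin n → ι // Injective φ} ≃ {ψ : Fin n → ι // StrictMono ψ} × Equiv.Perm (Fin n) where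
  toFun φ := (⟨φ.1 ∘ Tuple.sort φ.1, (Tuple.monotone_sort φ.1).strictMono_of_injective
    (φ.2.comp (Tuple.sort φ.1).injective)⟩, (Tuple.sort φ.1)⁻¹)
  invFun p := ⟨p.1.1 ∘ p.2, p.1.2.injective.comp p.2.injective⟩
  left_inv φ := Subtype.ext <| funext fun i => by simp
  right_inv := fun ⟨⟨ψ, hψ⟩, σ⟩ => by
    have hsort : Tuple.sort (ψ ∘ σ) = σ⁻¹ := by
      have h := Tuple.unique_monotone (Tuple.monotone_sort (ψ ∘ σ)) (τ := σ⁻¹)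
        (by simpa [comp_assoc] using hψ.monotone)
      exact Equiv.ext fun i => (hψ.injective.comp σ.injective) (congrFun h i)
    simp [hsort, comp_assoc]

namespace Matrix

variable {R : Type*} [CommRing R] {ι : Type*} [Fintype ι] {n : ℕ}

theorem det_mul_eq_sum_prod_mul_det_submatrix (A : Matrix (Fin n) ι R)
    (B : Matrix ι (Fin n) R) :
    (A * B).det = ∑ φ : Fin n → ι, (∏ i, A i (φ i)) * (B.submatrix φ id).det := by
  have hrows : A * B = of fun i => ∑ k, A i k • B k := by
    ext i j
    simp [mul_apply]
  rw [hrows, det]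
  change detRowAlternating.toMultilinearMap (fun i => ∑ k, A i k • B k) = _
  rw [MultilinearMap.map_sum]
  refine Fintype.sum_congr _ _ fun φ => ?_
  rw [MultilinearMap.map_smul_univ, smul_eq_mul]
  rfl

open Classical in
/-- The Cauchy–Binet formula. -/
theorem det_mul_eq_sum_strictMono [LinearOrder ι] (A : Matrix (Fin n) ι R)
    (B : Matrix ι (Fin n) R) :
    (A * B).det = ∑ ψ : {ψ : Fin n → ι // StrictMono ψ},
      (A.submatrix id ψ).det * (B.submatrix ψ id).det := by
  have hzero : ∀ φ : Fin n → ι, ¬ Injective φ → (B.submatrix φ id).det = 0 := by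
    intro φ hφ
    obtain ⟨i, j, hij, hne⟩ : ∃ i j, φ i = φ j ∧ i ≠ j := by
      simpa [Injective] using hφ
    exact det_zero_of_row_eq hne (funext fun k => by simp [hij])
  have hperm : ∀ (ψ : Fin n → ι) (σ : Equiv.Perm (Fin n)),
      (B.submatrix (ψ ∘ σ) id).det = Equiv.Perm.sign σ * (B.submatrix ψ id).det := fun ψ σ =>
    det_permute σ (B.submatrix ψ id)
  have hminor : ∀ ψ : Fin n → ι, (A.submatrix id ψ).det =
      ∑ σ : Equiv.Perm (Fin n), Equiv.Perm.sign σ * ∏ i, A i (ψ (σ i)) := fun ψ => by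
    rw [← det_transpose, det_apply']
    rfl
  rw [det_mul_eq_sum_prod_mul_det_submatrix, ← Fintype.sum_subtype_add_sum_subtype Injective,
    Fintype.sum_eq_zero (fun φ : {φ // ¬ Injective φ} =>
      (∏ i, A i (φ.1 i)) * (B.submatrix φ id).det) (fun φ => by rw [hzero φ φ.2, mul_zero]),
    add_zero, Fintype.sum_equiv (injectiveEquivStrictMonoProdPerm ι n) _
      (fun p => (∏ i, A i (p.1.1 (p.2 i))) * (B.submatrix (p.1.1 ∘ p.2) id).det)
      (fun φ => by simp [injectiveEquivStrictMonoProdPerm, comp_assoc]),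
    Fintype.sum_prod_type]
  refine Fintype.sum_congr _ _ fun ψ => ?_
  simp only [hperm, hminor, Finset.sum_mul]
  exact Fintype.sum_congr _ _ fun σ => by ring

theorem det_mul_pow_pos [LinearOrder ι] {R : Type*} [CommRing R] [LinearOrder R]
    [IsStrictOrderedRing R] (A : Matrix (Fin n) ι R) {z : ι → R} (hz : StrictMono z)
    (hn : n ≤ Fintype.card ι) (hA : ∀ ψ : Fin n → ι, StrictMono ψ → 0 < (A.submatrix id ψ).det) :
    0 < (A * of fun r (j : Fin n) => z r ^ (j : ℕ)).det := by
  classical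
  have : Nonempty {ψ : Fin n → ι // StrictMono ψ} :=
    ⟨⟨univ.orderEmbOfCardLe (by simpa using hn), OrderEmbedding.strictMono _⟩⟩
  rw [det_mul_eq_sum_strictMono]
  refine sum_pos (fun ψ _ => mul_pos (hA ψ ψ.2) ?_) univ_nonempty
  change 0 < (vandermonde (z ∘ ψ.1)).det
  rw [det_vandermonde]
  exact prod_pos fun i _ => prod_pos fun j hj => sub_pos.2 (hz (ψ.2 (mem_Ioi.1 hj)))

end Matrix

open Matrix

theorem Fin.removeNth_castSucc_last {α : Type*} {n : ℕ} (r : Fin (n + 2) → α) :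
    Fin.removeNth (Fin.last n).castSucc r =
      fun i => if i = Fin.last n then r (Fin.last (n + 1)) else r i.castSucc := by
  funext i
  rcases (Fin.le_last i).lt_or_eq with h | rfl
  · rw [if_neg h.ne, Fin.removeNth, Fin.succAbove_of_castSucc_lt _ _ (by simpa using h)]
  · rw [if_pos rfl, Fin.removeNth, Fin.succAbove_castSucc_self, Fin.succ_last]

theorem Fin.init_removeNth_castSucc_last {α : Type*} {n : ℕ} (r : Fin (n + 2) → α) :
    Fin.init (Fin.removeNth (Fin.last n).castSucc r) = Fin.init (Fin.init r) := by
  funext i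
  simp [Fin.removeNth_castSucc_last, Fin.init, (Fin.castSucc_lt_last i).ne]

section WeightedVandermonde

variable {ι R : Type*} [CommRing R] (w : ι → ℤ → R) (ζ : ι → R)

def weightedVandermonde {n : ℕ} (r : Fin n → ι) (m : ℤ) : Matrix (Fin n) (Fin n) R :=
  of fun i l => w (r l) (m + (i : ℕ)) * ζ (r l) ^ (i : ℕ)

theorem weightedVandermonde_submatrix_castSucc {n : ℕ} (r : Fin (n + 1) → ι) (m : ℤ)
    (f : Fin n → Fin (n + 1)) :
    (weightedVandermonde w ζ r m).submatrix Fin.castSucc f = weightedVandermonde w ζ (r ∘ f) m :=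
  rfl

theorem det_weightedVandermonde_submatrix_succ {n : ℕ} (r : Fin (n + 1) → ι) (m : ℤ)
    (f : Fin n → Fin (n + 1)) :
    ((weightedVandermonde w ζ r m).submatrix Fin.succ f).det =
      (∏ l, ζ (r (f l))) * (weightedVandermonde w ζ (r ∘ f) (m + 1)).det := by
  rw [← det_mul_row]
  congr 1
  ext i l
  simp only [weightedVandermonde, submatrix_apply, of_apply, Fin.val_succ, Function.comp_apply]
  push_cast
  ring_nf

theorem det_weightedVandermonde_mul_det {n : ℕ} (r : Fin (n + 2) → ι) (m : ℤ) :
    (weightedVandermonde w ζ r m).det *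
        ((∏ l, ζ (Fin.init (Fin.init r) l)) *
          (weightedVandermonde w ζ (Fin.init (Fin.init r)) (m + 1)).det) =
      (∏ l, ζ (Fin.removeNth (Fin.last n).castSucc r l)) *
          (weightedVandermonde w ζ (Fin.removeNth (Fin.last n).castSucc r) (m + 1)).det *
          (weightedVandermonde w ζ (Fin.init r) m).det -
        (weightedVandermonde w ζ (Fin.removeNth (Fin.last n).castSucc r) m).det *
          ((∏ l, ζ (Fin.init r l)) * (weightedVandermonde w ζ (Fin.init r) (m + 1)).det) := by
  have J := det_mul_det_submatrix_castSucc_succ (weightedVandermonde w ζ r m)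
  simp only [← submatrix_submatrix, weightedVandermonde_submatrix_castSucc,
    det_weightedVandermonde_submatrix_succ] at J
  exact J

end WeightedVandermonde

section HungryToda

variable {ι : Type*} {w : ι → ℤ → ℝ} {ζ : ι → ℝ} {W : (n : ℕ) → (Fin n → ι) → ℤ → ℝ}

theorem pos_of_gaussRecursion [LinearOrder ι] (h1 : ∀ (r : Fin 1 → ι) (m : ℤ), 0 < W 1 r m)
    (hWrec : ∀ (n : ℕ) (r : Fin (n + 2) → ι), StrictMono r → ∀ m : ℤ,
      W (n + 2) r (m + 1) =
        (W (n + 1) (Fin.init r) m * W (n + 1) (Fin.removeNth (Fin.last n).castSucc r) (m + 1) *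
            ζ (r (Fin.last (n + 1))) -
          W (n + 1) (Fin.init r) (m + 1) * W (n + 1) (Fin.removeNth (Fin.last n).castSucc r) m *
            ζ (r (Fin.last n).castSucc)) / W (n + 1) (Fin.init r) m)
    (hWineq : ∀ (n : ℕ) (r : Fin (n + 2) → ι), StrictMono r → ∀ m : ℤ,
      W (n + 1) (Fin.init r) (m + 1) * W (n + 1) (Fin.removeNth (Fin.last n).castSucc r) m *
          ζ (r (Fin.last n).castSucc) <
        W (n + 1) (Fin.init r) m * W (n + 1) (Fin.removeNth (Fin.last n).castSucc r) (m + 1) *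
          ζ (r (Fin.last (n + 1)))) :
    ∀ (n : ℕ) (r : Fin (n + 1) → ι), StrictMono r → ∀ m, 0 < W (n + 1) r m := by
  intro n
  induction n with
  | zero => exact fun r _ m => h1 r m
  | succ n ih =>
    intro r hr m
    obtain ⟨m, rfl⟩ : ∃ m', m = m' + 1 := ⟨m - 1, by ring⟩
    rw [hWrec n r hr m]
    exact div_pos (sub_pos.2 (hWineq n r hr m)) (ih _ (hr.comp Fin.strictMono_castSucc) m)

theorem det_weightedVandermonde_eq_det_init_mul {n : ℕ} (r : Fin (n + 2) → ι) (m : ℤ)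
    (hζ : ∀ i, ζ i ≠ 0) (hD : (weightedVandermonde w ζ (Fin.init (Fin.init r)) (m + 1)).det ≠ 0)
    (hW : W (n + 1) (Fin.init r) (m + n) ≠ 0)
    (hinit : ∀ m, (weightedVandermonde w ζ (Fin.init r) m).det =
      (weightedVandermonde w ζ (Fin.init (Fin.init r)) m).det * W (n + 1) (Fin.init r) (m + n))
    (hremove : ∀ m, (weightedVandermonde w ζ (Fin.removeNth (Fin.last n).castSucc r) m).det =
      (weightedVandermonde w ζ (Fin.init (Fin.init r)) m).det *
        W (n + 1) (Fin.removeNth (Fin.last n).castSucc r) (m + n))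
    (hrec : W (n + 2) r (m + n + 1) =
        (W (n + 1) (Fin.init r) (m + n) *
            W (n + 1) (Fin.removeNth (Fin.last n).castSucc r) (m + n + 1) *
            ζ (r (Fin.last (n + 1))) -
          W (n + 1) (Fin.init r) (m + n + 1) *
            W (n + 1) (Fin.removeNth (Fin.last n).castSucc r) (m + n) *
            ζ (r (Fin.last n).castSucc)) / W (n + 1) (Fin.init r) (m + n)) :
    (weightedVandermonde w ζ r m).det =
      (weightedVandermonde w ζ (Fin.init r) m).det * W (n + 2) r (m + n + 1) := by
  have J := det_weightedVandermonde_mul_det w ζ r m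
  have hprod_init : ∏ l, ζ (Fin.init r l) =
      (∏ l, ζ (Fin.init (Fin.init r) l)) * ζ (r (Fin.last n).castSucc) :=
    Fin.prod_univ_castSucc _
  have hprod_remove : ∏ l, ζ (Fin.removeNth (Fin.last n).castSucc r l) =
      (∏ l, ζ (Fin.init (Fin.init r) l)) * ζ (r (Fin.last (n + 1))) := by
    rw [Fin.prod_univ_castSucc, ← Fin.init_removeNth_castSucc_last]
    simp [Fin.removeNth_castSucc_last, Fin.init]
  rw [hprod_init, hprod_remove, hinit, hinit, hremove, hremove, add_right_comm m 1] at J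
  rw [eq_div_iff hW] at hrec
  have hP : (∏ l, ζ (Fin.init (Fin.init r) l)) ≠ 0 := prod_ne_zero_iff.2 fun l _ => hζ _
  apply mul_right_cancel₀ (mul_ne_zero hP hD)
  rw [hinit]
  linear_combination J - (weightedVandermonde w ζ (Fin.init (Fin.init r)) m).det *
    (∏ l, ζ (Fin.init (Fin.init r) l)) *
    (weightedVandermonde w ζ (Fin.init (Fin.init r)) (m + 1)).det * hrec

theorem det_weightedVandermonde_pos [LinearOrder ι] (hζ : ∀ i, ζ i ≠ 0)
    (hW1 : ∀ (r : Fin 1 → ι) (m : ℤ), W 1 r m = w (r 0) m)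
    (hWrec : ∀ (n : ℕ) (r : Fin (n + 2) → ι), StrictMono r → ∀ m : ℤ,
      W (n + 2) r (m + 1) =
        (W (n + 1) (Fin.init r) m * W (n + 1) (Fin.removeNth (Fin.last n).castSucc r) (m + 1) *
            ζ (r (Fin.last (n + 1))) -
          W (n + 1) (Fin.init r) (m + 1) * W (n + 1) (Fin.removeNth (Fin.last n).castSucc r) m *
            ζ (r (Fin.last n).castSucc)) / W (n + 1) (Fin.init r) m)
    (hWpos : ∀ (n : ℕ) (r : Fin (n + 1) → ι), StrictMono r → ∀ m, 0 < W (n + 1) r m) :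
    ∀ (n : ℕ) (r : Fin n → ι), StrictMono r → ∀ m, 0 < (weightedVandermonde w ζ r m).det := by
  suffices key : ∀ k,
      (∀ r : Fin k → ι, StrictMono r → ∀ m, 0 < (weightedVandermonde w ζ r m).det) ∧
      ∀ r : Fin (k + 1) → ι, StrictMono r → ∀ m, (weightedVandermonde w ζ r m).det =
        (weightedVandermonde w ζ (Fin.init r) m).det * W (k + 1) r (m + k) from
    fun n => (key n).1
  intro n
  induction n with
  | zero =>
    refine ⟨fun r _ m => by simp, fun r _ m => ?_⟩
    simp [weightedVandermonde, hW1]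
  | succ n ih =>
    have hpos : ∀ r : Fin (n + 1) → ι, StrictMono r → ∀ m,
        0 < (weightedVandermonde w ζ r m).det := fun r hr m => by
      rw [ih.2 r hr m]
      exact mul_pos (ih.1 _ (hr.comp Fin.strictMono_castSucc) m) (hWpos n r hr _)
    refine ⟨hpos, fun r hr m => ?_⟩
    have hinit := hr.comp Fin.strictMono_castSucc
    have hremove := hr.comp (Fin.strictMono_succAbove (Fin.last n).castSucc)
    push_cast
    rw [← add_assoc]
    refine det_weightedVandermonde_eq_det_init_mul r m hζ
      (ih.1 _ (hinit.comp Fin.strictMono_castSucc) _).ne' (hWpos n _ hinit _).ne'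
      (ih.2 _ hinit) (fun m => ?_) (hWrec n r hr _)
    rw [ih.2 (Fin.removeNth (Fin.last n).castSucc r) hremove, Fin.init_removeNth_castSucc_last]

end HungryToda

theorem of_moment_eq_mul {ι R : Type*} [Fintype ι] [CommRing R] {M : ℕ} {w : ι → ℤ → R}
    (hwper : ∀ r m, w r (m + M) = w r m) (ζ P : ι → R) {μ : ℕ → R}
    (hμ : ∀ m : ℕ, μ m = ∑ r, w r m * ζ r ^ m * P r) (k n : ℕ) :
    (of fun i j : Fin n => μ (k + i + M * j)) =
      (of fun (i : Fin n) r => ζ r ^ k * P r * (w r (k + (i : ℕ)) * ζ r ^ (i : ℕ))) *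
        of fun r (j : Fin n) => (ζ r ^ M) ^ (j : ℕ) := by
  ext i j
  rw [of_apply, hμ, mul_apply]
  refine sum_congr rfl fun r _ => ?_
  have hper : w r ((k + i + M * j : ℕ) : ℤ) = w r (k + (i : ℕ)) := by
    rw [← (Function.Periodic.nat_mul (hwper r) j) (k + (i : ℕ))]
    push_cast
    ring_nf
  simp only [of_apply, hper]
  ring

/-- Positivity of the tau functions of the nonautonomous discrete hungry Toda lattice with
finite lattice boundary condition: under the positivity condition on the Gauss-elimination
quantities `W`, all determinants `τ^{(k,t)}_n`, `1 ≤ n ≤ N`, are positive. -/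
theorem stmt_15
    (M N : ℕ) (hM : 1 ≤ M) (hN : 1 ≤ N)
    (ζ : Fin N → ℝ) (hζpos : ∀ r, 0 < ζ r) (hζmono : StrictMono ζ)
    (s : ℕ → ℝ) (hs : ∀ t : ℕ, s t < ζ ⟨0, hN⟩ ^ M)
    (w : Fin N → ℤ → ℝ) (hwpos : ∀ r m, 0 < w r m)
    (hwper : ∀ (r : Fin N) (m : ℤ), w r (m + M) = w r m)
    (W : (n : ℕ) → (Fin n → Fin N) → ℤ → ℝ)
    (hW1 : ∀ (r : Fin 1 → Fin N) (m : ℤ), W 1 r m = w (r 0) m)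
    (hWrec : ∀ (n : ℕ) (r : Fin (n + 2) → Fin N), StrictMono r → ∀ m : ℤ,
      W (n + 2) r (m + 1) =
        (W (n + 1) (fun i => r i.castSucc) m *
            W (n + 1) (fun i => if i = Fin.last n then r (Fin.last (n + 1)) else r i.castSucc)
              (m + 1) *
            ζ (r (Fin.last (n + 1))) -
          W (n + 1) (fun i => r i.castSucc) (m + 1) *
            W (n + 1) (fun i => if i = Fin.last n then r (Fin.last (n + 1)) else r i.castSucc)
              m *
            ζ (r ((Fin.last n).castSucc))) /
          W (n + 1) (fun i => r i.castSucc) m)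
    (hWineq : ∀ (n : ℕ) (r : Fin (n + 2) → Fin N), StrictMono r → ∀ m : ℤ,
      W (n + 1) (fun i => r i.castSucc) (m + 1) *
          W (n + 1) (fun i => if i = Fin.last n then r (Fin.last (n + 1)) else r i.castSucc) m *
          ζ (r ((Fin.last n).castSucc)) <
        W (n + 1) (fun i => r i.castSucc) m *
          W (n + 1) (fun i => if i = Fin.last n then r (Fin.last (n + 1)) else r i.castSucc)
            (m + 1) *
          ζ (r (Fin.last (n + 1))))
    (μ : ℕ → ℕ → ℝ)
    (hμ : ∀ t m : ℕ, μ t m = ∑ r : Fin N, w r (m : ℤ) * ζ r ^ m *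
      ∏ τ' ∈ Finset.range t, (ζ r ^ M - s τ'))
    (τ : ℕ → ℕ → ℕ → ℝ)
    (hτ : ∀ k t n : ℕ,
      τ k t n = Matrix.det (Matrix.of fun i j : Fin n => μ t (k + i + M * j))) :
    ∀ k t n : ℕ, 1 ≤ n → n ≤ N → 0 < τ k t n := by
  intro k t n _ hnN
  have hWrec' := by simpa only [← Fin.init_def, ← Fin.removeNth_castSucc_last] using hWrec
  have hWpos := pos_of_gaussRecursion (fun r m => hW1 r m ▸ hwpos _ _) hWrec'
    (by simpa only [← Fin.init_def, ← Fin.removeNth_castSucc_last] using hWineq)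
  have hDpos := det_weightedVandermonde_pos (fun i => (hζpos i).ne') hW1 hWrec' hWpos
  set P : Fin N → ℝ := fun r => ∏ τ' ∈ range t, (ζ r ^ M - s τ')
  have hP : ∀ r, 0 < P r := fun r => prod_pos fun τ' _ => sub_pos.2 <|
    (hs τ').trans_le <| pow_le_pow_left₀ (hζpos _).le (hζmono.monotone (Nat.zero_le r.1)) M
  have hz : StrictMono fun r => ζ r ^ M := fun a b h =>
    pow_lt_pow_left₀ (hζmono h) (hζpos a).le (by omega)
  rw [hτ, of_moment_eq_mul hwper ζ P (hμ t) k n]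
  refine det_mul_pow_pos _ hz (by simpa using hnN) fun ψ hψ => ?_
  change 0 < (of fun i l => (ζ (ψ l) ^ k * P (ψ l)) * weightedVandermonde w ζ ψ k i l).det
  rw [det_mul_row]
  exact mul_pos (prod_pos fun l _ => mul_pos (pow_pos (hζpos _) k) (hP _)) (hDpos n ψ hψ k)
end
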